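/- arXiv:2309.07548 — 2 statements merged into one kernel-verified Lean document; each statement's English description precedes it below -/
import Mathlib

section
/- Let H be a real Hilbert space, g ∈ H, α > 0, and f₁,…,f_I proper lower-semicontinuous convex functions with weights wᵢ ∈ (0,1], Σᵢ wᵢ = 1. Define T(Q) := g + α Σᵢ wᵢ prox_{fᵢ}((Q − g)/α). If ⋂ᵢ argmin_{Q∈H} fᵢ(Q) ≠ ∅, then the fixed-point set of T satisfies Fix T = g + α · ⋂ᵢ argmin_{Q∈H} fᵢ(Q), where the right-hand side denotes the set {g + α Q : Q ∈ ⋂ᵢ argmin fᵢ}. -/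
open scoped RealInnerProductSpace

noncomputable section

variable {H : Type*} [NormedAddCommGroup H] [InnerProductSpace ℝ H]

/-- `f : H → ℝ ∪ {+∞}` (modeled with `EReal`) is proper, convex and lower semicontinuous. -/
def ProperConvexLsc (f : H → EReal) : Prop :=
  (∃ x, f x ≠ ⊤) ∧ (∀ x, f x ≠ ⊥) ∧ LowerSemicontinuous f ∧
    ∀ x y : H, ∀ a b : ℝ, 0 ≤ a → 0 ≤ b → a + b = 1 →
      f (a • x + b • y) ≤ (a : EReal) * f x + (b : EReal) * f y

/-- `p` is the proximal mapping of `f`: for each `Q`, `p Q` minimizes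
`Q' ↦ f Q' + (1/2)‖Q' − Q‖²`. -/
def IsProxOf (f : H → EReal) (p : H → H) : Prop :=
  ∀ Q Q' : H,
    f (p Q) + ((‖p Q - Q‖ ^ 2 / 2 : ℝ) : EReal) ≤ f Q' + ((‖Q' - Q‖ ^ 2 / 2 : ℝ) : EReal)

section Aux

variable {f : H → EReal} {p : H → H}

lemma prox_ne_top (hf : ProperConvexLsc f) (hp : IsProxOf f p) (u : H) : f (p u) ≠ ⊤ := by
  obtain ⟨x₀, hx₀⟩ := hf.1
  intro htop
  have h := hp u x₀
  rw [htop, EReal.top_add_of_ne_bot (EReal.coe_ne_bot _)] at h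
  exact (EReal.add_lt_top hx₀ (EReal.coe_ne_top _)).ne (top_le_iff.mp h)

lemma prox_subgrad (hf : ProperConvexLsc f) (hp : IsProxOf f p) (u z : H) :
    (((f (p u)).toReal + ⟪u - p u, z - p u⟫ : ℝ) : EReal) ≤ f z := by
  set r : ℝ := (f (p u)).toReal with hrdef
  have hru : f (p u) = (r : EReal) := (EReal.coe_toReal (prox_ne_top hf hp u) (hf.2.1 _)).symm
  rcases eq_or_ne (f z) ⊤ with hz | hz
  · rw [hz]; exact le_top
  set s : ℝ := (f z).toReal with hsdef
  have hsz : f z = (s : EReal) := (EReal.coe_toReal hz (hf.2.1 _)).symm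
  rw [hsz, EReal.coe_le_coe_iff]
  set c : ℝ := ‖z - p u‖ ^ 2 / 2 with hcdef
  have hc0 : 0 ≤ c := by positivity
  have key : ∀ t : ℝ, 0 < t → t ≤ 1 → r + ⟪u - p u, z - p u⟫ ≤ s + t * c := by
    intro t ht ht1
    set zt := p u + t • (z - p u) with hztdef
    have hcv := hf.2.2.2 (p u) z (1 - t) t (by linarith) ht.le (by ring)
    have hzt' : (1 - t) • p u + t • z = zt := by rw [hztdef]; module
    rw [hzt', hru, hsz, ← EReal.coe_mul, ← EReal.coe_mul, ← EReal.coe_add] at hcv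
    have hztt : f zt ≠ ⊤ := ne_top_of_le_ne_top (EReal.coe_ne_top _) hcv
    set m : ℝ := (f zt).toReal with hmdef
    have hmz : f zt = (m : EReal) := (EReal.coe_toReal hztt (hf.2.1 _)).symm
    have hm1 : m ≤ (1 - t) * r + t * s := by rwa [hmz, EReal.coe_le_coe_iff] at hcv
    have hp1 := hp u zt
    rw [hru, hmz, ← EReal.coe_add, ← EReal.coe_add, EReal.coe_le_coe_iff] at hp1
    have hsub : zt - u = (p u - u) + t • (z - p u) := by rw [hztdef]; abel
    have hnorm : ‖zt - u‖ ^ 2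
        = ‖p u - u‖ ^ 2 + 2 * (t * ⟪p u - u, z - p u⟫) + t ^ 2 * ‖z - p u‖ ^ 2 := by
      rw [hsub, norm_add_sq_real, real_inner_smul_right, norm_smul, mul_pow,
        Real.norm_eq_abs, sq_abs]
    have hip : ⟪u - p u, z - p u⟫ = -⟪p u - u, z - p u⟫ := by
      rw [← inner_neg_left]; congr 1; abel
    rw [hip]
    nlinarith [hp1, hm1, hnorm, ht, mul_pos ht ht]
  have hfin : r + ⟪u - p u, z - p u⟫ ≤ s := by
    apply le_of_forall_pos_le_add
    intro ε hε
    have hcp : (0:ℝ) < c + 1 := by linarith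
    set t : ℝ := min 1 (ε / (c + 1)) with htdef
    have ht0 : 0 < t := lt_min one_pos (div_pos hε hcp)
    have ht1 : t ≤ 1 := min_le_left _ _
    have htc : t * c ≤ ε := by
      have h1 : t * c ≤ (ε / (c + 1)) * c :=
        mul_le_mul_of_nonneg_right (min_le_right _ _) hc0
      have h2 : (ε / (c + 1)) * c ≤ (ε / (c + 1)) * (c + 1) :=
        mul_le_mul_of_nonneg_left (by linarith) (div_pos hε hcp).le
      have h3 : (ε / (c + 1)) * (c + 1) = ε := div_mul_cancel₀ _ hcp.ne'
      linarith
    have := key t ht0 ht1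
    linarith
  exact hfin

lemma prox_firm (hf : ProperConvexLsc f) (hp : IsProxOf f p) (u v : H) :
    ‖p u - p v‖ ^ 2 ≤ ⟪p u - p v, u - v⟫ := by
  have hru : f (p u) = (((f (p u)).toReal : ℝ) : EReal) :=
    (EReal.coe_toReal (prox_ne_top hf hp u) (hf.2.1 _)).symm
  have hrv : f (p v) = (((f (p v)).toReal : ℝ) : EReal) :=
    (EReal.coe_toReal (prox_ne_top hf hp v) (hf.2.1 _)).symm
  have h1 := prox_subgrad hf hp u (p v)
  have h2 := prox_subgrad hf hp v (p u)
  rw [hrv, EReal.coe_le_coe_iff] at h1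
  rw [hru, EReal.coe_le_coe_iff] at h2
  have e1 : ⟪u - p u, p v - p u⟫ = ⟪p u - u, p u - p v⟫ := by
    rw [← inner_neg_neg]; congr 1 <;> abel
  rw [e1] at h1
  have h3 : ⟪(p u - u) + (v - p v), p u - p v⟫ ≤ 0 := by
    rw [inner_add_left]; linarith
  have e2 : (p u - u) + (v - p v) = (p u - p v) - (u - v) := by abel
  rw [e2, inner_sub_left, real_inner_self_eq_norm_sq] at h3
  linarith [real_inner_comm (p u - p v) (u - v)]

lemma minimizer_fixed (hf : ProperConvexLsc f) (hp : IsProxOf f p) {y : H}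
    (hy : ∀ Q', f y ≤ f Q') : p y = y := by
  obtain ⟨x₀, hx₀⟩ := hf.1
  have hyt : f y ≠ ⊤ := ne_top_of_le_ne_top hx₀ (hy x₀)
  have hyr : f y = (((f y).toReal : ℝ) : EReal) := (EReal.coe_toReal hyt (hf.2.1 _)).symm
  have hpr : f (p y) = (((f (p y)).toReal : ℝ) : EReal) :=
    (EReal.coe_toReal (prox_ne_top hf hp y) (hf.2.1 _)).symm
  have h := hp y y
  rw [hpr, hyr, ← EReal.coe_add, ← EReal.coe_add, EReal.coe_le_coe_iff] at h
  have h2 := hy (p y)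
  rw [hyr, hpr, EReal.coe_le_coe_iff] at h2
  have hz : ‖y - y‖ ^ 2 / 2 = 0 := by simp
  have hnorm : ‖p y - y‖ ^ 2 = 0 := by nlinarith [sq_nonneg ‖p y - y‖]
  have := pow_eq_zero_iff (n := 2) (by norm_num) |>.mp hnorm
  rwa [norm_eq_zero, sub_eq_zero] at this

lemma fixed_minimizer (hf : ProperConvexLsc f) (hp : IsProxOf f p) {x : H}
    (hx : p x = x) : ∀ z, f x ≤ f z := by
  intro z
  have h := prox_subgrad hf hp x z
  rw [hx] at h
  simp only [sub_self, inner_zero_left, add_zero] at h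
  have hxt : f x ≠ ⊤ := hx ▸ prox_ne_top hf hp x
  have hxr : f x = (((f x).toReal : ℝ) : EReal) := (EReal.coe_toReal hxt (hf.2.1 _)).symm
  rw [hxr]
  exact h

end Aux

theorem proximal_bellman_fixed_point_set [CompleteSpace H]
    (g : H) (α : ℝ) (hα : 0 < α) (I : ℕ)
    (f : Fin I → H → EReal) (hf : ∀ i, ProperConvexLsc (f i))
    (p : Fin I → H → H) (hp : ∀ i, IsProxOf (f i) (p i))
    (w : Fin I → ℝ) (hw : ∀ i, w i ∈ Set.Ioc (0 : ℝ) 1) (hsum : ∑ i, w i = 1)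
    (T : H → H) (hT : ∀ Q, T Q = g + α • ∑ i, w i • p i (α⁻¹ • (Q - g)))
    (hne : (⋂ i, {Q : H | ∀ Q' : H, f i Q ≤ f i Q'}).Nonempty) :
    {Q : H | T Q = Q} =
      (fun Q : H => g + α • Q) '' ⋂ i, {Q : H | ∀ Q' : H, f i Q ≤ f i Q'} := by
  obtain ⟨y, hy⟩ := hne
  simp only [Set.mem_iInter, Set.mem_setOf_eq] at hy
  have hpy : ∀ i, p i y = y := fun i => minimizer_fixed (hf i) (hp i) (hy i)
  ext Q
  simp only [Set.mem_setOf_eq, Set.mem_image, Set.mem_iInter]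
  constructor
  · intro hQ
    set x := α⁻¹ • (Q - g) with hxdef
    have hax : α • x = Q - g := by
      rw [hxdef, smul_smul, mul_inv_cancel₀ hα.ne', one_smul]
    have hQx : g + α • x = Q := by rw [hax]; abel
    have hsumfix : ∑ i, w i • p i x = x := by
      have h1 : g + α • ∑ i, w i • p i x = g + α • x := by
        rw [← hT Q, hQ, hQx]
      have h2 : α • ∑ i, w i • p i x = α • x := add_left_cancel h1
      exact smul_right_injective H hα.ne' h2
    have hm : ∑ i, (w i • (p i x - y)) = x - y := by
      have : ∀ i ∈ Finset.univ, w i • (p i x - y) = w i • p i x - w i • y := fun i _ => smul_sub _ _ _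
      rw [Finset.sum_congr rfl this, Finset.sum_sub_distrib, hsumfix, ← Finset.sum_smul, hsum,
        one_smul]
    have hfirm : ∀ i, ‖p i x - y‖ ^ 2 ≤ ⟪p i x - y, x - y⟫ := by
      intro i
      have := prox_firm (hf i) (hp i) x y
      rwa [hpy i] at this
    have hinner_eq : ∑ i, w i * ⟪p i x - y, x - y⟫ = ‖x - y‖ ^ 2 := by
      have : ∀ i ∈ Finset.univ, w i * ⟪p i x - y, x - y⟫ = ⟪w i • (p i x - y), x - y⟫ :=
        fun i _ => (real_inner_smul_left _ _ _).symm
      rw [Finset.sum_congr rfl this, ← sum_inner, hm, real_inner_self_eq_norm_sq]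
    have hsum2 : ∑ i, w i * ‖p i x - y‖ ^ 2 ≤ ‖x - y‖ ^ 2 := by
      rw [← hinner_eq]
      exact Finset.sum_le_sum fun i _ => mul_le_mul_of_nonneg_left (hfirm i) (hw i).1.le
    have hvar : ∑ i, w i * ‖(p i x - y) - (x - y)‖ ^ 2
        = ∑ i, w i * ‖p i x - y‖ ^ 2 - ‖x - y‖ ^ 2 := by
      have expand : ∀ i ∈ Finset.univ, w i * ‖(p i x - y) - (x - y)‖ ^ 2
          = w i * ‖p i x - y‖ ^ 2 - 2 * (w i * ⟪p i x - y, x - y⟫) + w i * ‖x - y‖ ^ 2 := by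
        intro i _
        have : ‖(p i x - y) - (x - y)‖ ^ 2
            = ‖p i x - y‖ ^ 2 - 2 * ⟪p i x - y, x - y⟫ + ‖x - y‖ ^ 2 := by
          rw [sub_eq_add_neg, norm_add_sq_real, inner_neg_right, norm_neg]; ring
        rw [this]; ring
      rw [Finset.sum_congr rfl expand, Finset.sum_add_distrib, Finset.sum_sub_distrib,
        ← Finset.mul_sum, hinner_eq, ← Finset.sum_mul, hsum]
      ring
    have hzero : ∑ i, w i * ‖(p i x - y) - (x - y)‖ ^ 2 = 0 := by
      have hle : ∑ i, w i * ‖(p i x - y) - (x - y)‖ ^ 2 ≤ 0 := by rw [hvar]; linarith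
      have hge : 0 ≤ ∑ i, w i * ‖(p i x - y) - (x - y)‖ ^ 2 :=
        Finset.sum_nonneg fun i _ => mul_nonneg (hw i).1.le (sq_nonneg _)
      linarith
    have hfix : ∀ i, p i x = x := by
      intro i
      have := (Finset.sum_eq_zero_iff_of_nonneg
        (fun i _ => mul_nonneg (hw i).1.le (sq_nonneg _))).mp hzero i (Finset.mem_univ i)
      have hn : ‖(p i x - y) - (x - y)‖ ^ 2 = 0 := by
        rcases mul_eq_zero.mp this with h | h
        · exact absurd h (hw i).1.ne'
        · exact h
      have := pow_eq_zero_iff (n := 2) (by norm_num) |>.mp hn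
      rw [norm_eq_zero, sub_eq_zero] at this
      exact sub_left_injective this
    exact ⟨x, fun i => fixed_minimizer (hf i) (hp i) (hfix i), hQx⟩
  · rintro ⟨x, hxmin, hxQ⟩
    have hpxi : ∀ i, p i x = x := fun i => minimizer_fixed (hf i) (hp i) (hxmin i)
    rw [hT Q, ← hxQ]
    have hx : α⁻¹ • (g + α • x - g) = x := by
      rw [add_sub_cancel_left, smul_smul, inv_mul_cancel₀ hα.ne', one_smul]
    rw [hx]
    simp only [hpxi]
    rw [← Finset.sum_smul, hsum, one_smul]
end
end

section
/- Let H be a real Hilbert space and T: H → H nonexpansive with Fix T ≠ ∅. For Q₀ ∈ H and λ_n ∈ [0,1] with Σ_{n∈ℕ} λ_n(1 − λ_n) = +∞, the Krasnosel'skii–Mann sequence Q_{n+1} := (1 − λ_n)Q_n + λ_n T(Q_n) satisfies ‖Q_n − T(Q_n)‖ → 0 as n → ∞. -/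
open Filter
open scoped RealInnerProductSpace

variable {H : Type*} [NormedAddCommGroup H] [InnerProductSpace ℝ H]

theorem km_iteration_asymptotic_regularity [CompleteSpace H]
    (T : H → H) (hT : ∀ x y : H, ‖T x - T y‖ ≤ ‖x - y‖)
    (hfix : ∃ q : H, T q = q)
    (lam : ℕ → ℝ) (hlam : ∀ n, lam n ∈ Set.Icc (0 : ℝ) 1)
    (hdiv : Tendsto (fun N => ∑ n ∈ Finset.range N, lam n * (1 - lam n)) atTop atTop)
    (Q : ℕ → H) (hQ : ∀ n, Q (n + 1) = (1 - lam n) • Q n + lam n • T (Q n)) :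
    Tendsto (fun n => ‖Q n - T (Q n)‖) atTop (nhds 0) := by
  obtain ⟨q, hq⟩ := hfix
  set r : ℕ → ℝ := fun n => ‖Q n - T (Q n)‖ with hrdef
  have hl0 : ∀ n, 0 ≤ lam n := fun n => (hlam n).1
  have hl1 : ∀ n, lam n ≤ 1 := fun n => (hlam n).2
  have hrnonneg : ∀ n, 0 ≤ r n := fun n => norm_nonneg _
  -- residual is nonincreasing
  have hmono : ∀ n, r (n + 1) ≤ r n := by
    intro n
    have h1 : Q (n + 1) - T (Q n) = (1 - lam n) • (Q n - T (Q n)) := by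
      rw [hQ n]; module
    have h2 : Q n - Q (n + 1) = lam n • (Q n - T (Q n)) := by
      rw [hQ n]; module
    have htri : r (n + 1) ≤ ‖Q (n + 1) - T (Q n)‖ + ‖T (Q n) - T (Q (n + 1))‖ := by
      have := dist_triangle (Q (n + 1)) (T (Q n)) (T (Q (n + 1)))
      simpa [dist_eq_norm, hrdef] using this
    have e1 : ‖Q (n + 1) - T (Q n)‖ = (1 - lam n) * r n := by
      rw [h1, norm_smul, Real.norm_eq_abs, abs_of_nonneg (by linarith [hl1 n])]
    have e2 : ‖T (Q n) - T (Q (n + 1))‖ ≤ lam n * r n := by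
      calc ‖T (Q n) - T (Q (n + 1))‖ ≤ ‖Q n - Q (n + 1)‖ := hT _ _
        _ = lam n * r n := by
            rw [h2, norm_smul, Real.norm_eq_abs, abs_of_nonneg (hl0 n)]
    calc r (n + 1) ≤ (1 - lam n) * r n + lam n * r n := by
          rw [← e1]; exact le_trans htri (by linarith)
      _ = r n := by ring
  -- key inequality
  have hkey : ∀ n, lam n * (1 - lam n) * r n ^ 2 ≤ ‖Q n - q‖ ^ 2 - ‖Q (n + 1) - q‖ ^ 2 := by
    intro n
    set a := Q n - q with ha
    set b := T (Q n) - q with hb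
    have hba : ‖b‖ ≤ ‖a‖ := by
      have := hT (Q n) q
      rwa [hq] at this
    have hcomb : Q (n + 1) - q = (1 - lam n) • a + lam n • b := by
      rw [hQ n, ha, hb]; module
    have hab : a - b = Q n - T (Q n) := by rw [ha, hb]; abel
    have e1 : ⟪(1 - lam n) • a + lam n • b, (1 - lam n) • a + lam n • b⟫
        = (1 - lam n) ^ 2 * ⟪a, a⟫ + 2 * ((1 - lam n) * lam n) * ⟪a, b⟫
          + lam n ^ 2 * ⟪b, b⟫ := by
      simp only [inner_add_add_self, real_inner_smul_left, real_inner_smul_right,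
        real_inner_comm b a]
      ring
    have e2 : ⟪a - b, a - b⟫ = ⟪a, a⟫ - 2 * ⟪a, b⟫ + ⟪b, b⟫ := by
      rw [inner_sub_sub_self, real_inner_comm b a]; ring
    have na : ⟪a, a⟫ = ‖a‖ ^ 2 := real_inner_self_eq_norm_sq a
    have nb : ⟪b, b⟫ = ‖b‖ ^ 2 := real_inner_self_eq_norm_sq b
    have nc : ⟪(1 - lam n) • a + lam n • b, (1 - lam n) • a + lam n • b⟫
        = ‖Q (n + 1) - q‖ ^ 2 := by
      rw [← hcomb]; exact real_inner_self_eq_norm_sq _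
    have nd : ⟪a - b, a - b⟫ = r n ^ 2 := by
      rw [real_inner_self_eq_norm_sq, hab]
    -- identity: ‖Q(n+1)-q‖² + λ(1-λ)‖a-b‖² = (1-λ)‖a‖² + λ‖b‖²
    have hid : ‖Q (n + 1) - q‖ ^ 2 + lam n * (1 - lam n) * r n ^ 2
        = (1 - lam n) * ‖a‖ ^ 2 + lam n * ‖b‖ ^ 2 := by
      rw [← nc, ← nd, e1, e2, na, nb]; ring
    have hb2 : ‖b‖ ^ 2 ≤ ‖a‖ ^ 2 := by
      have := mul_self_le_mul_self (norm_nonneg b) hba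
      nlinarith
    nlinarith [mul_le_mul_of_nonneg_left hb2 (hl0 n)]
  -- telescoping sum bound
  have hsum : ∀ N, ∑ n ∈ Finset.range N, lam n * (1 - lam n) * r n ^ 2 ≤ ‖Q 0 - q‖ ^ 2 := by
    intro N
    have htel : ∑ n ∈ Finset.range N, (‖Q n - q‖ ^ 2 - ‖Q (n + 1) - q‖ ^ 2)
        = ‖Q 0 - q‖ ^ 2 - ‖Q N - q‖ ^ 2 :=
      Finset.sum_range_sub' (fun n => ‖Q n - q‖ ^ 2) N
    calc ∑ n ∈ Finset.range N, lam n * (1 - lam n) * r n ^ 2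
        ≤ ∑ n ∈ Finset.range N, (‖Q n - q‖ ^ 2 - ‖Q (n + 1) - q‖ ^ 2) :=
          Finset.sum_le_sum fun n _ => hkey n
      _ = ‖Q 0 - q‖ ^ 2 - ‖Q N - q‖ ^ 2 := htel
      _ ≤ ‖Q 0 - q‖ ^ 2 := by nlinarith [sq_nonneg ‖Q N - q‖]
  -- conclude
  have hanti : Antitone r := antitone_nat_of_succ_le hmono
  have hbdd : BddBelow (Set.range r) := ⟨0, by rintro x ⟨n, rfl⟩; exact hrnonneg n⟩
  have htend : Tendsto r atTop (nhds (⨅ n, r n)) := tendsto_atTop_ciInf hanti hbdd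
  have hL0 : 0 ≤ ⨅ n, r n := le_ciInf hrnonneg
  suffices hL : (⨅ n, r n) = 0 by rw [hL] at htend; exact htend
  by_contra hne
  have hLpos : 0 < ⨅ n, r n := lt_of_le_of_ne hL0 (Ne.symm hne)
  set L := ⨅ n, r n with hLdef
  have hge : ∀ n, L ≤ r n := fun n => ciInf_le hbdd n
  have hbound : ∀ N, L ^ 2 * ∑ n ∈ Finset.range N, lam n * (1 - lam n) ≤ ‖Q 0 - q‖ ^ 2 := by
    intro N
    rw [Finset.mul_sum]
    refine le_trans (Finset.sum_le_sum fun n _ => ?_) (hsum N)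
    have hL2 : L ^ 2 ≤ r n ^ 2 := by nlinarith [hge n, hrnonneg n, hLpos.le]
    have hnn : 0 ≤ lam n * (1 - lam n) := mul_nonneg (hl0 n) (by linarith [hl1 n])
    calc L ^ 2 * (lam n * (1 - lam n)) = lam n * (1 - lam n) * L ^ 2 := by ring
      _ ≤ lam n * (1 - lam n) * r n ^ 2 := mul_le_mul_of_nonneg_left hL2 hnn
  have hL2pos : 0 < L ^ 2 := by positivity
  have hdiv2 : Tendsto (fun N => L ^ 2 * ∑ n ∈ Finset.range N, lam n * (1 - lam n))
      atTop atTop := hdiv.const_mul_atTop hL2pos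
  obtain ⟨N, hN⟩ := (tendsto_atTop.mp hdiv2 (‖Q 0 - q‖ ^ 2 + 1)).exists
  linarith [hbound N]
end
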